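/- arXiv:2408.00861 — 4 statements merged into one kernel-verified Lean document; each statement's English description precedes it below -/
import Mathlib

section
/- With d, p, q as before (d > 0 non-square rational, p < 0, q ≠ 0, d' := p² − q²d > 0), suppose in addition that d' = d·t² for some rational t > 0. Then s₋ = i√(−(p − q√d)) lies in the subfield ℚ(√d, s₊) of ℂ; concretely, s₋ = −t·√d / s₊. Hence all four roots ±s₊, ±s₋ of X⁴ − 2pX² + d' lie in ℚ(√d, s₊), i.e. the extension is normal. -/
/-!
Since `(p + q√d)(p − q√d) = d' = (t√d)²`, the real square roots of `−(p ± q√d)` multiply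
to `t√d`, so `s₊ s₋ = i² · t√d = −t√d`. Both radicands are positive, since their product
`d t²` and their sum `−2p` are, so `s₊ ≠ 0` and dividing by it expresses `s₋` rationally in
`√d` and `s₊`.
-/

open Complex

lemma pos_of_mul_pos_of_add_pos {α : Type*} [Ring α] [LinearOrder α] [IsStrictOrderedRing α]
    {a b : α} (hab : 0 < a * b) (hsum : 0 < a + b) : 0 < a := by
  rcases pos_and_pos_or_neg_and_neg_of_mul_pos hab with h | h
  · exact h.1
  · exact absurd hsum (add_neg h.1 h.2).not_gt

lemma Real.sqrt_mul_sqrt_of_mul_eq_sq {a b c : ℝ} (ha : 0 ≤ a) (hc : 0 ≤ c)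
    (h : a * b = c ^ 2) : √a * √b = c := by
  rw [← Real.sqrt_mul ha, h, Real.sqrt_sq hc]

lemma Complex.I_mul_sqrt_mul_I_mul_sqrt {a b c : ℝ} (ha : 0 ≤ a) (hc : 0 ≤ c)
    (h : a * b = c ^ 2) : (I * (√a : ℂ)) * (I * (√b : ℂ)) = -(c : ℂ) := by
  have hroots : ((√a * √b : ℝ) : ℂ) = c := by rw [Real.sqrt_mul_sqrt_of_mul_eq_sq ha hc h]
  push_cast at hroots
  rw [mul_mul_mul_comm, I_mul_I, hroots, neg_one_mul]

theorem stmt_8_general (d p q : ℚ) (hd : 0 < d)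
    (hp : p < 0)
    (t : ℚ) (ht : 0 < t) (hdt : p ^ 2 - q ^ 2 * d = d * t ^ 2)
    (splus sminus : ℂ)
    (hsp : splus = Complex.I * (Real.sqrt (-((p : ℝ) + (q : ℝ) * Real.sqrt d)) : ℝ))
    (hsm : sminus = Complex.I * (Real.sqrt (-((p : ℝ) - (q : ℝ) * Real.sqrt d)) : ℝ)) :
    sminus = -(t : ℂ) * ((Real.sqrt d : ℝ) : ℂ) / splus ∧
    ∀ z ∈ ({splus, -splus, sminus, -sminus} : Set ℂ),
      z ∈ IntermediateField.adjoin ℚ ({((Real.sqrt d : ℝ) : ℂ), splus} : Set ℂ) := by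
  set r : ℝ := √(d : ℝ)
  have hr2 : r ^ 2 = d := Real.sq_sqrt (by exact_mod_cast hd.le)
  have hdt' : (p : ℝ) ^ 2 - (q : ℝ) ^ 2 * d = d * (t : ℝ) ^ 2 := by exact_mod_cast hdt
  have hprod : -((p : ℝ) + q * r) * -((p : ℝ) - q * r) = (t * r) ^ 2 := by
    linear_combination hdt' - ((q : ℝ) ^ 2 + (t : ℝ) ^ 2) * hr2
  have htr : (0 : ℝ) < t * r :=
    mul_pos (by exact_mod_cast ht) (Real.sqrt_pos.2 (by exact_mod_cast hd))
  have hp' : (p : ℝ) < 0 := by exact_mod_cast hp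
  have hA : 0 < -((p : ℝ) + q * r) :=
    pos_of_mul_pos_of_add_pos (by rw [hprod]; positivity) (by linarith)
  have hmul : splus * sminus = -((t * r : ℝ) : ℂ) := by
    rw [hsp, hsm]; exact I_mul_sqrt_mul_I_mul_sqrt hA.le htr.le hprod
  have hspne : splus ≠ 0 := by
    rw [hsp]; exact mul_ne_zero I_ne_zero (ofReal_ne_zero.2 (Real.sqrt_ne_zero'.2 hA))
  have hsminus : sminus = -(t : ℂ) * (r : ℂ) / splus := by
    rw [eq_div_iff hspne, mul_comm, hmul]; push_cast; ring
  refine ⟨hsminus, ?_⟩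
  set K := IntermediateField.adjoin ℚ ({(r : ℂ), splus} : Set ℂ)
  have hrK : (r : ℂ) ∈ K := IntermediateField.subset_adjoin ℚ _ (by simp)
  have hsplusK : splus ∈ K := IntermediateField.subset_adjoin ℚ _ (by simp)
  have hsminusK : sminus ∈ K := hsminus ▸
    div_mem (mul_mem (neg_mem (SubfieldClass.ratCast_mem K t)) hrK) hsplusK
  rintro z (rfl | rfl | rfl | rfl)
  · exact hsplusK
  · exact neg_mem hsplusK
  · exact hsminusK
  · exact neg_mem hsminusK

/-- Case (B): if `d' = p² − q²d = d·t²` for some rational `t > 0`, then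
`s₋ = −t√d/s₊`, and all four roots `±s₊, ±s₋` of `X⁴ − 2pX² + d'` lie in
`ℚ(√d, s₊)`, i.e. the extension is normal. -/
theorem stmt_8 (d p q : ℚ) (hd : 0 < d) (hdns : ¬∃ r : ℚ, r ^ 2 = d)
    (hp : p < 0) (hq : q ≠ 0) (hdisc : 0 < p ^ 2 - q ^ 2 * d)
    (t : ℚ) (ht : 0 < t) (hdt : p ^ 2 - q ^ 2 * d = d * t ^ 2)
    (splus sminus : ℂ)
    (hsp : splus = Complex.I * (Real.sqrt (-((p : ℝ) + (q : ℝ) * Real.sqrt d)) : ℝ))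
    (hsm : sminus = Complex.I * (Real.sqrt (-((p : ℝ) - (q : ℝ) * Real.sqrt d)) : ℝ)) :
    sminus = -(t : ℂ) * ((Real.sqrt d : ℝ) : ℂ) / splus ∧
    ∀ z ∈ ({splus, -splus, sminus, -sminus} : Set ℂ),
      z ∈ IntermediateField.adjoin ℚ ({((Real.sqrt d : ℝ) : ℂ), splus} : Set ℂ) :=
  stmt_8_general d p q hd hp t ht hdt splus sminus hsp hsm
end

section
/- The set {(A, B, D) ∈ ℝ³ : B² + 4BD + 2D² = 0 and A⁴ − 2A²(B² − 2D²) + 8B²D² = 1} is an unbounded subset of ℝ³. -/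
/-!
Along the line `B = -(2 + √2) D` the first equation holds identically, and the quartic becomes
the perfect square `(A² - (4 + 4√2) D²)²`. Hence `A = √((4 + 4√2) D² + 1)` gives a point of the
set over every `D ∈ ℝ`, so the projection to the `D`-coordinate is onto `ℝ`.
-/

open Real

noncomputable def hodgePoint (D : ℝ) : ℝ × ℝ × ℝ :=
  (√((4 + 4 * √2) * D ^ 2 + 1), -(2 + √2) * D, D)

lemma quadric_eq_zero_of_eq (B D : ℝ) (hB : B = -(2 + √2) * D) :
    B ^ 2 + 4 * B * D + 2 * D ^ 2 = 0 := by
  have hs : √2 ^ 2 = 2 := sq_sqrt zero_le_two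
  subst hB
  linear_combination D ^ 2 * hs

lemma quartic_eq_sq_of_eq (A B D : ℝ) (hB : B = -(2 + √2) * D) :
    A ^ 4 - 2 * A ^ 2 * (B ^ 2 - 2 * D ^ 2) + 8 * B ^ 2 * D ^ 2
      = (A ^ 2 - (4 + 4 * √2) * D ^ 2) ^ 2 := by
  have hs : √2 ^ 2 = 2 := sq_sqrt zero_le_two
  subst hB
  linear_combination (-2 * A ^ 2 * D ^ 2 - 8 * D ^ 4) * hs

lemma hodgePoint_mem (D : ℝ) :
    (hodgePoint D).2.1 ^ 2 + 4 * (hodgePoint D).2.1 * (hodgePoint D).2.2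
        + 2 * (hodgePoint D).2.2 ^ 2 = 0 ∧
      (hodgePoint D).1 ^ 4
          - 2 * (hodgePoint D).1 ^ 2 * ((hodgePoint D).2.1 ^ 2 - 2 * (hodgePoint D).2.2 ^ 2)
        + 8 * (hodgePoint D).2.1 ^ 2 * (hodgePoint D).2.2 ^ 2 = 1 := by
  have hA : √((4 + 4 * √2) * D ^ 2 + 1) ^ 2 = (4 + 4 * √2) * D ^ 2 + 1 :=
    sq_sqrt (by positivity)
  have hB : (hodgePoint D).2.1 = -(2 + √2) * (hodgePoint D).2.2 := rfl
  refine ⟨quadric_eq_zero_of_eq _ _ hB, ?_⟩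
  rw [quartic_eq_sq_of_eq _ _ _ hB]
  simp only [hodgePoint, hA]
  ring

/-- The real points `{(A,B,D) : B² + 4BD + 2D² = 0, A⁴ − 2A²(B² − 2D²) + 8B²D² = 1}`
of the Hodge group form an unbounded subset of `ℝ³`. -/
theorem stmt_11 :
    ¬ Bornology.IsBounded {v : ℝ × ℝ × ℝ |
      v.2.1 ^ 2 + 4 * v.2.1 * v.2.2 + 2 * v.2.2 ^ 2 = 0 ∧
      v.1 ^ 4 - 2 * v.1 ^ 2 * (v.2.1 ^ 2 - 2 * v.2.2 ^ 2)
        + 8 * v.2.1 ^ 2 * v.2.2 ^ 2 = 1} := by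
  intro hbdd
  have hproj := (LipschitzWith.prod_snd.comp LipschitzWith.prod_snd).isBounded_image hbdd
  refine NormedSpace.unbounded_univ ℝ ℝ (hproj.subset fun D _ => ?_)
  exact ⟨hodgePoint D, hodgePoint_mem D, rfl⟩
end

section
/- Let d be a positive rational number that is not the square of a rational. Suppose C, D, C', D' ∈ ℚ satisfy D·C = C'·D' and d·C² + D² = d·D'² + C'². Then (C, D) = (D', C') or (C, D) = (−D', −C'). -/
/-!
Eliminating with `DC = C'D'` gives `(d C² - C'²) (C² - D'²) = 0`. As `d` is not a square,
`d C² = C'²` forces `C = C' = 0`, and then `D² = d D'²` forces `D = D' = 0`. Otherwise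
`C² = D'²` and `D² = C'²`, and `DC = C'D'` makes the two signs agree.
-/

theorem eq_zero_and_eq_zero_of_mul_sq_eq_sq {K : Type*} [Field K] {d x y : K}
    (hd : ¬IsSquare d) (h : d * x ^ 2 = y ^ 2) : x = 0 ∧ y = 0 := by
  have hx : x = 0 := by
    by_contra hx
    exact hd ⟨y / x, by field_simp; linear_combination h⟩
  subst hx
  exact ⟨rfl, pow_eq_zero_iff two_ne_zero |>.mp (by simpa using h.symm)⟩

theorem eq_and_eq_or_eq_neg_and_eq_neg_of_sq_eq_sq {R : Type*} [CommRing R] [NoZeroDivisors R]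
    {x y u v : R} (hx : x ^ 2 = y ^ 2) (hu : u ^ 2 = v ^ 2) (h : u * x = v * y) :
    (x = y ∧ u = v) ∨ (x = -y ∧ u = -v) := by
  rcases sq_eq_sq_iff_eq_or_eq_neg.mp hx with rfl | rfl <;>
    rcases sq_eq_sq_iff_eq_or_eq_neg.mp hu with rfl | rfl
  · exact .inl ⟨rfl, rfl⟩
  · have h0 : 2 * v * x = 0 := by linear_combination -h
    rcases mul_eq_zero.mp h0 with h0 | rfl
    · rcases mul_eq_zero.mp h0 with h2 | rfl
      · exact .inl ⟨rfl, by linear_combination -v * h2⟩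
      · exact .inl ⟨rfl, neg_zero⟩
    · exact .inr ⟨neg_zero.symm, rfl⟩
  · have h0 : 2 * u * y = 0 := by linear_combination -h
    rcases mul_eq_zero.mp h0 with h0 | rfl
    · rcases mul_eq_zero.mp h0 with h2 | rfl
      · exact .inl ⟨by linear_combination -y * h2, rfl⟩
      · exact .inr ⟨rfl, neg_zero.symm⟩
    · exact .inl ⟨neg_zero, rfl⟩
  · exact .inr ⟨rfl, rfl⟩

theorem eq_and_eq_or_eq_neg_and_eq_neg_of_mul_eq_of_add_sq_eq {K : Type*} [Field K]
    {d C D C' D' : K} (hd : ¬IsSquare d) (h1 : D * C = C' * D')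
    (h2 : d * C ^ 2 + D ^ 2 = d * D' ^ 2 + C' ^ 2) :
    (C = D' ∧ D = C') ∨ (C = -D' ∧ D = -C') := by
  have key : (d * C ^ 2 - C' ^ 2) * (C ^ 2 - D' ^ 2) = 0 := by
    linear_combination C ^ 2 * h2 - (D * C + C' * D') * h1
  rcases mul_eq_zero.mp key with hC | hC
  · obtain ⟨rfl, rfl⟩ := eq_zero_and_eq_zero_of_mul_sq_eq_sq hd (sub_eq_zero.mp hC)
    obtain ⟨rfl, rfl⟩ := eq_zero_and_eq_zero_of_mul_sq_eq_sq hd (x := D') (y := D)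
      (by linear_combination -h2)
    simp
  · have hC : C ^ 2 = D' ^ 2 := sub_eq_zero.mp hC
    exact eq_and_eq_or_eq_neg_and_eq_neg_of_sq_eq_sq hC (by linear_combination h2 - d * hC) h1

theorem stmt_12_general (d : ℚ) (hdns : ¬∃ r : ℚ, r ^ 2 = d)
    (C D C' D' : ℚ) (h1 : D * C = C' * D')
    (h2 : d * C ^ 2 + D ^ 2 = d * D' ^ 2 + C' ^ 2) :
    (C = D' ∧ D = C') ∨ (C = -D' ∧ D = -C') :=
  eq_and_eq_or_eq_neg_and_eq_neg_of_mul_eq_of_add_sq_eq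
    (fun ⟨r, hr⟩ => hdns ⟨r, by rw [hr, sq]⟩) h1 h2

/-- For non-square `d > 0`: if `DC = C'D'` and `dC² + D² = dD'² + C'²`, then
`(C,D) = (D',C')` or `(C,D) = (−D',−C')`. -/
theorem stmt_12 (d : ℚ) (hd : 0 < d) (hdns : ¬∃ r : ℚ, r ^ 2 = d)
    (C D C' D' : ℚ) (h1 : D * C = C' * D')
    (h2 : d * C ^ 2 + D ^ 2 = d * D' ^ 2 + C' ^ 2) :
    (C = D' ∧ D = C') ∨ (C = -D' ∧ D = -C') :=
  stmt_12_general d hdns C D C' D' h1 h2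
end

section
/- Let V be a nonzero finite-dimensional vector space over ℚ and let R be a ℚ-subalgebra of End_ℚ(V). Suppose ι : R → R is a ℚ-linear map with ι(f∘g) = ι(g)∘ι(f), ι(ι(f)) = f for all f, g ∈ R, and trace(ι(f)∘f) > 0 for every nonzero f ∈ R. Then for every nonzero a ∈ R the element ι(a)∘a is not nilpotent; consequently R contains no nonzero two-sided ideal consisting of nilpotent elements (R is semisimple). -/
set_option maxHeartbeats 1000000

set_option synthInstance.maxHeartbeats 1000000 in

/-- Rosati-involution positivity implies semisimplicity: if `R` is a
`ℚ`-subalgebra of `End(V)` with a `ℚ`-linear involution `ι` reversing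
products such that `trace(ι(f)∘f) > 0` for all nonzero `f`, then `ι(a)∘a` is
never nilpotent for `a ≠ 0`, and `R` has no nonzero nil two-sided ideal. -/
theorem stmt_17 (V : Type*) [AddCommGroup V] [Module ℚ V]
    [FiniteDimensional ℚ V] [Nontrivial V]
    (R : Subalgebra ℚ (Module.End ℚ V)) (ι : R →ₗ[ℚ] R)
    (hanti : ∀ f g : R, ι (f * g) = ι g * ι f)
    (hinv : ∀ f : R, ι (ι f) = f)
    (hpos : ∀ f : R, f ≠ 0 →
      0 < LinearMap.trace ℚ V ((ι f : Module.End ℚ V) ∘ₗ (f : Module.End ℚ V))) :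
    (∀ a : R, a ≠ 0 → ¬IsNilpotent (ι a * a)) ∧
    ∀ I : TwoSidedIdeal R, (∀ x ∈ I, IsNilpotent x) → I = ⊥ := by
  -- key: ι f * f ≠ 0 for f ≠ 0
  have hne : ∀ f : R, f ≠ 0 → ι f * f ≠ 0 := by
    intro f hf h0
    have hp := hpos f hf
    have hc : ((ι f : Module.End ℚ V) ∘ₗ (f : Module.End ℚ V)) =
        ((ι f * f : R) : Module.End ℚ V) := rfl
    rw [hc, h0] at hp
    rw [ZeroMemClass.coe_zero, map_zero] at hp
    exact lt_irrefl 0 hp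
  have key : ∀ a : R, a ≠ 0 → ¬IsNilpotent (ι a * a) := by
    intro a ha
    set b := ι a * a with hb
    have hιb : ι b = b := by
      rw [hb, hanti, hinv]
    have hpow : ∀ n : ℕ, ι (b ^ 2 ^ n) = b ^ 2 ^ n ∧ b ^ 2 ^ n ≠ 0 := by
      intro n
      induction n with
      | zero =>
        simp only [pow_zero, pow_one]
        exact ⟨hιb, fun h0 => hne a ha (hb ▸ h0)⟩
      | succ n ih =>
        have h2 : b ^ 2 ^ (n + 1) = b ^ 2 ^ n * b ^ 2 ^ n := by
          rw [← pow_add, pow_succ, mul_two]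
        constructor
        · rw [h2, hanti, ih.1]
        · rw [h2]
          have hh := hne _ ih.2
          rwa [ih.1] at hh
    rintro ⟨m, hm⟩
    have hb0 : b ^ 2 ^ m = 0 := by
      have hle : m ≤ 2 ^ m := Nat.le_of_lt (Nat.lt_two_pow_self (n := m))
      calc b ^ 2 ^ m = b ^ m * b ^ (2 ^ m - m) := by
            rw [← pow_add, Nat.add_sub_cancel' hle]
        _ = 0 := by rw [hm, zero_mul]
    exact (hpow m).2 hb0
  refine ⟨key, ?_⟩
  intro I hI
  ext x
  simp only [TwoSidedIdeal.mem_bot]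
  constructor
  · intro hx
    by_contra hx0
    have hmem : ι x * x ∈ I := I.mul_mem_left _ _ hx
    exact key x hx0 (hI _ hmem)
  · rintro rfl; exact I.zero_mem
end
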